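/- Let U ⊆ ℂ be a nonempty connected open set and let p : U → ℂ be holomorphic with deriv p nonvanishing on U. Then the Schwarzian derivative S(p) vanishes identically on U if and only if there exist complex numbers a, b, c, d with ad − bc ≠ 0 such that cz + d ≠ 0 and p(z) = (az + b)/(cz + d) for all z ∈ U. -/

import Mathlib

/-- The Schwarzian derivative `S(g) = g'''/g' − (3/2)(g''/g')²`. -/
noncomputable def schwarzian (g : ℂ → ℂ) (z : ℂ) : ℂ :=
  deriv (deriv (deriv g)) z / deriv g z - (3 / 2) * (deriv (deriv g) z / deriv g z) ^ 2

/-!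
With the pre-Schwarzian `q = p''/p'` one has `S(p) = q' - q²/2`, so `S(p) = 0` is the Riccati
equation `q' = q²/2`. Fix `z₀ ∈ U` and the linear function `u = c z + d` with `u z₀ = 1` and
`q u + 2c = 0` at `z₀`. Then `(q u + 2c)²/p'`, and afterwards `p' u²`, have zero derivative, so on
the connected set `U` we get `q u + 2c = 0` and `p' = p'(z₀)/u²`: the derivative of a Möbius map
agreeing with `p` at `z₀`. The converse is a direct computation with the derivatives of a Möbius map.
-/

open Filter Topology

theorem IsOpen.eq_of_hasDerivAt_zero {𝕜 G : Type*} [RCLike 𝕜] [NormedAddCommGroup G]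
    [NormedSpace 𝕜 G] {s : Set 𝕜} (hs : IsOpen s) (hs' : IsPreconnected s) {f : 𝕜 → G}
    (hf : ∀ z ∈ s, HasDerivAt f 0 z) {x y : 𝕜} (hx : x ∈ s) (hy : y ∈ s) : f x = f y :=
  hs.is_const_of_deriv_eq_zero hs' (fun z hz => (hf z hz).differentiableAt.differentiableWithinAt)
    (fun z hz => (hf z hz).deriv) hx hy

theorem hasDerivAt_mobius {a b c d z : ℂ} (hz : c * z + d ≠ 0) :
    HasDerivAt (fun w => (a * w + b) / (c * w + d)) ((a * d - b * c) / (c * z + d) ^ 2) z := by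
  refine (((hasDerivAt_id' z).const_mul a).add_const b |>.div
    (((hasDerivAt_id' z).const_mul c).add_const d) hz).congr_deriv ?_
  ring

theorem hasDerivAt_div_linear_pow (K c d : ℂ) (n : ℕ) {z : ℂ} (hz : c * z + d ≠ 0) :
    HasDerivAt (fun w => K / (c * w + d) ^ n) (-(n * c * K) / (c * z + d) ^ (n + 1)) z := by
  refine ((hasDerivAt_const z K).div
    (((hasDerivAt_id' z).const_mul c).add_const d |>.pow n) (pow_ne_zero n hz)).congr_deriv ?_
  rcases n with _ | n
  · simp
  · simp only [Pi.pow_apply]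
    field_simp
    push_cast
    ring

theorem schwarzian_congr {f g : ℂ → ℂ} {z : ℂ} (h : f =ᶠ[𝓝 z] g) :
    schwarzian f z = schwarzian g z := by
  simp only [schwarzian, h.deriv_eq, h.deriv.deriv_eq, h.deriv.deriv.deriv_eq]

theorem schwarzian_mobius {a b c d z : ℂ} (hz : c * z + d ≠ 0) :
    schwarzian (fun w => (a * w + b) / (c * w + d)) z = 0 := by
  set K := a * d - b * c
  have hnhds : ∀ᶠ w in 𝓝 z, c * w + d ≠ 0 :=
    (continuous_const.mul continuous_id |>.add continuous_const).continuousAt.eventually_ne hz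
  have h1 : deriv (fun w => (a * w + b) / (c * w + d)) =ᶠ[𝓝 z] fun w => K / (c * w + d) ^ 2 :=
    hnhds.mono fun w hw => (hasDerivAt_mobius hw).deriv
  have h2 : deriv (fun w => K / (c * w + d) ^ 2) =ᶠ[𝓝 z] fun w => -(2 * c * K) / (c * w + d) ^ 3 :=
    hnhds.mono fun w hw => by simpa using (hasDerivAt_div_linear_pow K c d 2 hw).deriv
  have h3 := (hasDerivAt_div_linear_pow (-(2 * c * K)) c d 3 hz).deriv
  rw [schwarzian, h1.deriv_eq, (h1.deriv.trans h2).deriv_eq, h3,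
    (hasDerivAt_mobius hz).deriv, h2.self_of_nhds]
  by_cases hK : K = 0
  · simp [hK]
  · field_simp
    push_cast
    ring

noncomputable def preSchwarzian (g : ℂ → ℂ) (z : ℂ) : ℂ :=
  deriv (deriv g) z / deriv g z

theorem deriv_deriv_eq_preSchwarzian_mul {g : ℂ → ℂ} {z : ℂ} (hg' : deriv g z ≠ 0) :
    deriv (deriv g) z = preSchwarzian g z * deriv g z :=
  (div_mul_cancel₀ _ hg').symm

theorem hasDerivAt_preSchwarzian {g : ℂ → ℂ} {z : ℂ} (hg' : deriv g z ≠ 0)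
    (h1 : DifferentiableAt ℂ (deriv g) z) (h2 : DifferentiableAt ℂ (deriv (deriv g)) z) :
    HasDerivAt (preSchwarzian g) (schwarzian g z + preSchwarzian g z ^ 2 / 2) z := by
  refine (h2.hasDerivAt.div h1.hasDerivAt hg').congr_deriv ?_
  simp only [schwarzian, preSchwarzian]
  field_simp
  ring

section VanishingSchwarzian

variable {U : Set ℂ} {p : ℂ → ℂ} (hU : IsOpen U) (hUc : IsPreconnected U)
  (hp : AnalyticOnNhd ℂ p U) (hp' : ∀ z ∈ U, deriv p z ≠ 0) (hS : ∀ z ∈ U, schwarzian p z = 0)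
include hp hp' hS

theorem hasDerivAt_preSchwarzian_of_schwarzian_eq_zero {z : ℂ} (hz : z ∈ U) :
    HasDerivAt (preSchwarzian p) (preSchwarzian p z ^ 2 / 2) z := by
  simpa [hS z hz] using hasDerivAt_preSchwarzian (hp' z hz) (hp.deriv z hz).differentiableAt
    (hp.deriv.deriv z hz).differentiableAt

include hU hUc

theorem preSchwarzian_mul_linear_add_eq_zero {c d z₀ : ℂ} (hz₀ : z₀ ∈ U)
    (h₀ : preSchwarzian p z₀ * (c * z₀ + d) + 2 * c = 0) {z : ℂ} (hz : z ∈ U) :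
    preSchwarzian p z * (c * z + d) + 2 * c = 0 := by
  -- `1 / p'` is an integrating factor for `(q u + 2c)' = (q / 2) (q u + 2c)`, where
  -- `q = preSchwarzian p` and `u = c z + d`.
  have hderiv : ∀ w ∈ U,
      HasDerivAt (fun w => (preSchwarzian p w * (c * w + d) + 2 * c) ^ 2 / deriv p w) 0 w := by
    intro w hw
    have hq := hasDerivAt_preSchwarzian_of_schwarzian_eq_zero hp hp' hS hw
    have hpw := (hp.deriv w hw).differentiableAt.hasDerivAt
    refine ((((hq.mul (((hasDerivAt_id' w).const_mul c).add_const d)).add_const (2 * c)).pow 2).div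
      hpw (hp' w hw)).congr_deriv ?_
    simp only [Pi.mul_apply, Pi.pow_apply, deriv_deriv_eq_preSchwarzian_mul (hp' w hw)]
    ring
  simpa [h₀, hp' z hz] using hU.eq_of_hasDerivAt_zero hUc hderiv hz hz₀

theorem deriv_mul_linear_sq_eq {c d z₀ : ℂ} (hz₀ : z₀ ∈ U)
    (h₀ : preSchwarzian p z₀ * (c * z₀ + d) + 2 * c = 0) {z : ℂ} (hz : z ∈ U) :
    deriv p z * (c * z + d) ^ 2 = deriv p z₀ * (c * z₀ + d) ^ 2 := by
  refine hU.eq_of_hasDerivAt_zero hUc (f := fun w => deriv p w * (c * w + d) ^ 2)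
    (fun w hw => ?_) hz hz₀
  refine ((hp.deriv w hw).differentiableAt.hasDerivAt.mul
    ((((hasDerivAt_id' w).const_mul c).add_const d).pow 2)).congr_deriv ?_
  have key := preSchwarzian_mul_linear_add_eq_zero hU hUc hp hp' hS hz₀ h₀ hw
  simp only [Pi.pow_apply, deriv_deriv_eq_preSchwarzian_mul (hp' w hw)]
  push_cast
  linear_combination (deriv p w * (c * w + d)) * key

theorem exists_eqOn_mobius_of_schwarzian_eq_zero (hne : U.Nonempty) :
    ∃ a b c d : ℂ, a * d - b * c ≠ 0 ∧
      ∀ z ∈ U, c * z + d ≠ 0 ∧ p z = (a * z + b) / (c * z + d) := by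
  obtain ⟨z₀, hz₀⟩ := hne
  set c := -preSchwarzian p z₀ / 2
  set d := 1 - c * z₀
  set K := deriv p z₀
  have hu₀ : c * z₀ + d = 1 := by ring
  have hpu : ∀ z ∈ U, deriv p z * (c * z + d) ^ 2 = K := fun z hz =>
    (deriv_mul_linear_sq_eq hU hUc hp hp' hS hz₀ (by rw [hu₀]; ring) hz).trans (by simp [hu₀, K])
  have hu : ∀ z ∈ U, c * z + d ≠ 0 := fun z hz h => hp' z₀ hz₀ (by simpa [h] using (hpu z hz).symm)
  set a := p z₀ * c + K
  set b := p z₀ * d - K * z₀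
  have hK : a * d - b * c = K := by linear_combination K * hu₀
  refine ⟨a, b, c, d, hK ▸ hp' z₀ hz₀, fun z hz => ⟨hu z hz, ?_⟩⟩
  refine hU.eqOn_of_deriv_eq hUc hp.differentiableOn (fun w hw =>
    (hasDerivAt_mobius (hu w hw)).differentiableAt.differentiableWithinAt) (fun w hw => ?_)
    hz₀ (by simp only [hu₀, div_one]; ring) hz
  rw [(hasDerivAt_mobius (hu w hw)).deriv, hK, ← hpu w hw]
  field_simp [hu w hw]

end VanishingSchwarzian

theorem stmt_13_general (U : Set ℂ) (hU : IsOpen U) (hconn : IsConnected U)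
    (p : ℂ → ℂ) (hp : DifferentiableOn ℂ p U) (hp' : ∀ z ∈ U, deriv p z ≠ 0) :
    (∀ z ∈ U, schwarzian p z = 0) ↔
      ∃ a b c d : ℂ, a * d - b * c ≠ 0 ∧
        ∀ z ∈ U, c * z + d ≠ 0 ∧ p z = (a * z + b) / (c * z + d) := by
  refine ⟨fun hS => exists_eqOn_mobius_of_schwarzian_eq_zero hU hconn.isPreconnected
    (hp.analyticOnNhd hU) hp' hS hconn.nonempty, ?_⟩
  rintro ⟨a, b, c, d, -, h⟩ z hz
  have hpM : p =ᶠ[𝓝 z] fun w => (a * w + b) / (c * w + d) :=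
    eventually_of_mem (hU.mem_nhds hz) fun w hw => (h w hw).2
  rw [schwarzian_congr hpM, schwarzian_mobius (h z hz).1]

/-- On a nonempty connected open set `U`, a holomorphic function `p` with
nonvanishing derivative has identically vanishing Schwarzian derivative on `U`
if and only if `p` is the restriction to `U` of a Möbius transformation
`z ↦ (az + b)/(cz + d)` with `ad − bc ≠ 0` (and `cz + d ≠ 0` on `U`). -/
theorem stmt_13 (U : Set ℂ) (hU : IsOpen U) (hne : U.Nonempty) (hconn : IsConnected U)
    (p : ℂ → ℂ) (hp : DifferentiableOn ℂ p U) (hp' : ∀ z ∈ U, deriv p z ≠ 0) :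
    (∀ z ∈ U, schwarzian p z = 0) ↔
      ∃ a b c d : ℂ, a * d - b * c ≠ 0 ∧
        ∀ z ∈ U, c * z + d ≠ 0 ∧ p z = (a * z + b) / (c * z + d) :=
  stmt_13_general U hU hconn p hp hp'
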